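/- Let z : ℝ → ℝ² be twice continuously differentiable with ‖z'(s)‖ = 1 for all s, let (a,b)^⊥ = (−b,a), κ(s) = ⟨z''(s), (z'(s))^⊥⟩, and x(s,λ) = z(s) + λ·(z'(s))^⊥. Let ψ : ℝ² → ℝ be twice continuously differentiable, define the velocity field v = ∇^⊥ψ = (−∂₂ψ, ∂₁ψ), set T(s,λ) = ∂_s x(s,λ), N(s,λ) = ∂_λ x(s,λ) = (z'(s))^⊥, and ψ̄ = ψ ∘ x. Then for every s ∈ ℝ: Σ_{i,j} T^i(s,0)·(∂_i v^j + ∂_j v^i)(z(s))·N^j(s,0) = ∂_s²ψ̄(s,0) − κ(s)·∂_λψ̄(s,0) − ∂_λ²ψ̄(s,0). -/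

import Mathlib

open Filter Topology ContinuousLinearMap

/-- Counterclockwise rotation by `π/2`: `(a,b)^⊥ = (-b, a)`. -/
noncomputable def perp (a : EuclideanSpace ℝ (Fin 2)) : EuclideanSpace ℝ (Fin 2) :=
  WithLp.toLp 2 ![-(a 1), a 0]

/-- `j`-th partial derivative of a real-valued function on `ℝ²`. -/
noncomputable def pdE (f : EuclideanSpace ℝ (Fin 2) → ℝ) (j : Fin 2)
    (q : EuclideanSpace ℝ (Fin 2)) : ℝ :=
  fderiv ℝ f q (EuclideanSpace.single j 1)

/-- Partial derivative in `s` of a function on `ℝ × ℝ`. -/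
noncomputable def ps (f : ℝ × ℝ → ℝ) (p : ℝ × ℝ) : ℝ := fderiv ℝ f p (1, 0)

/-- Partial derivative in `λ` of a function on `ℝ × ℝ`. -/
noncomputable def pl (f : ℝ × ℝ → ℝ) (p : ℝ × ℝ) : ℝ := fderiv ℝ f p (0, 1)

/-- `perp` as a continuous linear map. -/
noncomputable def lperp : EuclideanSpace ℝ (Fin 2) →L[ℝ] EuclideanSpace ℝ (Fin 2) :=
  LinearMap.toContinuousLinearMap
    { toFun := perp
      map_add' := by
        intro a b; ext i
        fin_cases i <;> simp [perp] <;> ring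
      map_smul' := by
        intro c a; ext i
        fin_cases i <;> simp [perp] <;> ring }

lemma perp_eq_lperp (a : EuclideanSpace ℝ (Fin 2)) : perp a = lperp a := rfl

@[simp] lemma lperp_apply_zero (a : EuclideanSpace ℝ (Fin 2)) : lperp a 0 = -(a 1) := by rw [← perp_eq_lperp]; rfl
@[simp] lemma lperp_apply_one (a : EuclideanSpace ℝ (Fin 2)) : lperp a 1 = a 0 := by rw [← perp_eq_lperp]; rfl

lemma euclid_decomp (a : EuclideanSpace ℝ (Fin 2)) :
    a = a 0 • EuclideanSpace.single (0 : Fin 2) (1 : ℝ)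
      + a 1 • EuclideanSpace.single (1 : Fin 2) (1 : ℝ) := by
  ext i
  fin_cases i <;> simp [EuclideanSpace.single_apply]

lemma inner_coords (a b : EuclideanSpace ℝ (Fin 2)) :
    (inner ℝ a b : ℝ) = a 0 * b 0 + a 1 * b 1 := by
  simp [PiLp.inner_apply, Fin.sum_univ_two, RCLike.inner_apply, conj_trivial, mul_comm]

/-- If `F` is continuous at `p` with `p.2 = 0`, then `q ↦ q.2 * F q` is differentiable at `p`. -/
lemma hasFDerivAt_snd_mul_of_continuousAt {F : ℝ × ℝ → ℝ} {p : ℝ × ℝ} (hp : p.2 = 0)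
    (hF : ContinuousAt F p) :
    HasFDerivAt (fun q => q.2 * F q)
      ((ContinuousLinearMap.snd ℝ ℝ ℝ).smulRight (F p)) p := by
  rw [hasFDerivAt_iff_isLittleO_nhds_zero, Asymptotics.isLittleO_iff]
  intro c hc
  have h1 : Tendsto (fun h : ℝ × ℝ => F (p + h)) (𝓝 0) (𝓝 (F p)) := by
    have hcont : Continuous (fun h : ℝ × ℝ => p + h) := by fun_prop
    exact hF.tendsto.comp (hcont.tendsto' 0 p (by simp))
  have h2 : ∀ᶠ h : ℝ × ℝ in 𝓝 0, |F (p + h) - F p| ≤ c := by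
    filter_upwards [h1 (Metric.closedBall_mem_nhds (F p) hc)] with h hh
    simpa [Real.dist_eq] using hh
  filter_upwards [h2] with h hh
  have e1 : (p + h).2 * F (p + h) - p.2 * F p -
      ((ContinuousLinearMap.snd ℝ ℝ ℝ).smulRight (F p)) h = h.2 * (F (p + h) - F p) := by
    simp [hp]; ring
  rw [e1]
  have h3 : |h.2| ≤ ‖h‖ := by simpa using norm_snd_le h
  calc ‖h.2 * (F (p + h) - F p)‖ = |h.2| * |F (p + h) - F p| := by simp [abs_mul]
    _ ≤ ‖h‖ * c := mul_le_mul h3 hh (abs_nonneg _) (norm_nonneg _)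
    _ = c * ‖h‖ := mul_comm _ _

/-- Derivative of `q ↦ g q.1` for `g : ℝ → E`. -/
lemma hasFDerivAt_comp_fst {E : Type*} [NormedAddCommGroup E] [NormedSpace ℝ E]
    {g : ℝ → E} {p : ℝ × ℝ} (h : DifferentiableAt ℝ g p.1) :
    HasFDerivAt (fun q : ℝ × ℝ => g q.1)
      ((ContinuousLinearMap.fst ℝ ℝ ℝ).smulRight (deriv g p.1)) p := by
  have h1 : HasFDerivAt g ((1 : ℝ →L[ℝ] ℝ).smulRight (deriv g p.1)) p.1 :=
    hasDerivAt_iff_hasFDerivAt.mp h.hasDerivAt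
  have h2 := h1.comp p (hasFDerivAt_fst (p := p))
  refine h2.congr_fderiv ?_
  ext <;> simp

set_option maxHeartbeats 1000000 in
/-- Tangential–normal component of the deformation tensor of `v = ∇^⊥ψ` on
the curve `λ = 0` in tubular coordinates:
`∑_{i,j} T^i (∂_i v^j + ∂_j v^i)(z(s)) N^j = ∂ₛ²ψ̄(s,0) − κ ∂_λψ̄(s,0) − ∂_λ²ψ̄(s,0)`. -/
theorem stmt_12 (z : ℝ → EuclideanSpace ℝ (Fin 2)) (hz : ContDiff ℝ 2 z)
    (hunit : ∀ s, ‖deriv z s‖ = 1)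
    (κ : ℝ → ℝ) (hκ : ∀ s, κ s = inner ℝ (deriv (deriv z) s) (perp (deriv z s)))
    (x : ℝ × ℝ → EuclideanSpace ℝ (Fin 2))
    (hx : ∀ p, x p = z p.1 + p.2 • perp (deriv z p.1))
    (ψ : EuclideanSpace ℝ (Fin 2) → ℝ) (hψ : ContDiff ℝ 2 ψ)
    (v : EuclideanSpace ℝ (Fin 2) → Fin 2 → ℝ)
    (hv0 : ∀ q, v q 0 = -(pdE ψ 1 q)) (hv1 : ∀ q, v q 1 = pdE ψ 0 q)
    (T N : ℝ → EuclideanSpace ℝ (Fin 2))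
    (hT : ∀ s, T s = fderiv ℝ x (s, 0) (1, 0))
    (hN : ∀ s, N s = fderiv ℝ x (s, 0) (0, 1))
    (ψb : ℝ × ℝ → ℝ) (hψb : ∀ p, ψb p = ψ (x p)) :
    ∀ s : ℝ,
      (∑ i : Fin 2, ∑ j : Fin 2,
          T s i * (pdE (fun q => v q j) i (z s) + pdE (fun q => v q i) j (z s)) * N s j) =
        ps (fun p => ps ψb p) (s, 0) - κ s * pl ψb (s, 0) - pl (fun p => pl ψb p) (s, 0) := by
  intro s
  have h21 : (2 : WithTop ℕ∞) = 1 + 1 := by norm_num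
  -- regularity of z
  have hzd : Differentiable ℝ z := hz.differentiable two_ne_zero
  have hz1 : ContDiff ℝ 1 (deriv z) := by
    rw [h21, contDiff_succ_iff_deriv] at hz
    exact hz.2.2
  have hz'd : Differentiable ℝ (deriv z) := hz1.differentiable one_ne_zero
  have hz''c : Continuous (deriv (deriv z)) := by
    rw [contDiff_one_iff_deriv] at hz1
    exact hz1.2
  -- regularity of ψ
  have hψd : Differentiable ℝ ψ := hψ.differentiable two_ne_zero
  have hψ1 : ContDiff ℝ 1 (fderiv ℝ ψ) := by
    rw [h21, contDiff_succ_iff_fderiv] at hψ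
    exact hψ.2.2
  have hDψd : Differentiable ℝ (fderiv ℝ ψ) := hψ1.differentiable one_ne_zero
  set f2 := fderiv ℝ (fderiv ℝ ψ) with hf2def
  -- derivative of x
  set Dx : ℝ × ℝ → (ℝ × ℝ) →L[ℝ] EuclideanSpace ℝ (Fin 2) := fun p =>
    (fst ℝ ℝ ℝ).smulRight (deriv z p.1) +
      (p.2 • (lperp.comp ((fst ℝ ℝ ℝ).smulRight (deriv (deriv z) p.1))) +
        (snd ℝ ℝ ℝ).smulRight (lperp (deriv z p.1))) with hDxdef
  have hxe : x = fun q : ℝ × ℝ => z q.1 + q.2 • lperp (deriv z q.1) := by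
    funext q; rw [hx q, perp_eq_lperp]
  have hxD : ∀ p : ℝ × ℝ, HasFDerivAt x (Dx p) p := by
    intro p
    have hA : HasFDerivAt (fun q : ℝ × ℝ => z q.1)
        ((fst ℝ ℝ ℝ).smulRight (deriv z p.1)) p := hasFDerivAt_comp_fst (hzd p.1)
    have hB0 : HasFDerivAt (fun q : ℝ × ℝ => deriv z q.1)
        ((fst ℝ ℝ ℝ).smulRight (deriv (deriv z) p.1)) p := hasFDerivAt_comp_fst (hz'd p.1)
    have hB1 : HasFDerivAt (fun q : ℝ × ℝ => lperp (deriv z q.1))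
        (lperp.comp ((fst ℝ ℝ ℝ).smulRight (deriv (deriv z) p.1))) p :=
      lperp.hasFDerivAt.comp p hB0
    have hsnd : HasFDerivAt (fun q : ℝ × ℝ => q.2) (snd ℝ ℝ ℝ) p := hasFDerivAt_snd
    have hB := hsnd.smul hB1
    rw [hxe, hDxdef]
    exact hA.add hB
  have hDx10 : ∀ p : ℝ × ℝ, Dx p (1, 0)
      = deriv z p.1 + p.2 • lperp (deriv (deriv z) p.1) := by
    intro p; simp [hDxdef]
  have hDx01 : ∀ p : ℝ × ℝ, Dx p (0, 1) = lperp (deriv z p.1) := by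
    intro p; simp [hDxdef]
  have hxs : x (s, 0) = z s := by rw [hx]; simp
  have hDxs10 : Dx (s, 0) (1, 0) = deriv z s := by rw [hDx10]; simp
  -- T and N
  have hT' : T s = deriv z s := by
    rw [hT, (hxD (s, 0)).fderiv, hDxs10]
  have hN' : N s = lperp (deriv z s) := by
    rw [hN, (hxD (s, 0)).fderiv, hDx01]
  -- first derivatives of ψb
  have hψbD : ∀ p : ℝ × ℝ, HasFDerivAt ψb ((fderiv ℝ ψ (x p)).comp (Dx p)) p := by
    intro p
    have hψbe : ψb = ψ ∘ x := funext fun q => hψb q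
    rw [hψbe]
    exact (hψd (x p)).hasFDerivAt.comp p (hxD p)
  have hps' : ∀ p : ℝ × ℝ, ps ψb p = fderiv ℝ ψ (x p) (deriv z p.1) +
      p.2 * fderiv ℝ ψ (x p) (lperp (deriv (deriv z) p.1)) := by
    intro p
    simp only [ps, (hψbD p).fderiv, ContinuousLinearMap.comp_apply, hDx10, map_add, map_smul,
      smul_eq_mul]
  have hpl' : ∀ p : ℝ × ℝ, pl ψb p = fderiv ℝ ψ (x p) (lperp (deriv z p.1)) := by
    intro p
    simp only [pl, (hψbD p).fderiv, ContinuousLinearMap.comp_apply, hDx01]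
  -- derivative of q ↦ fderiv ψ (x q)
  have hc : ∀ p : ℝ × ℝ, HasFDerivAt (fun q => fderiv ℝ ψ (x q))
      ((f2 (x p)).comp (Dx p)) p := by
    intro p
    exact (hDψd (x p)).hasFDerivAt.comp p (hxD p)
  -- second λ-derivative
  have hu' := lperp.hasFDerivAt.comp ((s : ℝ), (0 : ℝ))
    (hasFDerivAt_comp_fst (p := ((s : ℝ), (0 : ℝ))) (hz'd s))
  have hpll : pl (fun p => pl ψb p) (s, 0)
      = f2 (z s) (lperp (deriv z s)) (lperp (deriv z s)) := by
    have hG := (hc (s, 0)).clm_apply hu'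
    have hG2 : HasFDerivAt (fun q : ℝ × ℝ => fderiv ℝ ψ (x q) (lperp (deriv z q.1))) _ (s, 0) := hG
    have he : (fun p : ℝ × ℝ => pl ψb p)
        = fun q : ℝ × ℝ => fderiv ℝ ψ (x q) (lperp (deriv z q.1)) := funext hpl'
    rw [pl, he, hG2.fderiv]
    simp [hDx01, hxs]
  -- second s-derivative
  have hu2 := hasFDerivAt_comp_fst (g := deriv z) (p := ((s : ℝ), (0 : ℝ))) (hz'd s)
  have hT1 := (hc (s, 0)).clm_apply hu2
  have hFc : ContinuousAt
      (fun p : ℝ × ℝ => fderiv ℝ ψ (x p) (lperp (deriv (deriv z) p.1))) (s, 0) := by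
    have hxc : Continuous x := by
      rw [hxe]
      exact ((hzd.continuous.comp continuous_fst)).add
        (continuous_snd.smul (lperp.continuous.comp (hz'd.continuous.comp continuous_fst)))
    have hpair0 := (hψ1.continuous.comp hxc).prodMk
        (lperp.continuous.comp (hz''c.comp continuous_fst))
    have hpair : Continuous (fun p : ℝ × ℝ =>
        ((fderiv ℝ ψ (x p), lperp (deriv (deriv z) p.1)) :
          (EuclideanSpace ℝ (Fin 2) →L[ℝ] ℝ) × EuclideanSpace ℝ (Fin 2))) := by
      simpa [Function.comp_def] using hpair0
    exact ((isBoundedBilinearMap_apply.continuous).comp hpair).continuousAt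
  have hT2 := hasFDerivAt_snd_mul_of_continuousAt (F :=
      fun p : ℝ × ℝ => fderiv ℝ ψ (x p) (lperp (deriv (deriv z) p.1))) rfl hFc
  have hpss : ps (fun p => ps ψb p) (s, 0)
      = f2 (z s) (deriv z s) (deriv z s) + fderiv ℝ ψ (z s) (deriv (deriv z) s) := by
    have he : (fun p : ℝ × ℝ => ps ψb p)
        = fun p : ℝ × ℝ => fderiv ℝ ψ (x p) (deriv z p.1) +
            p.2 * fderiv ℝ ψ (x p) (lperp (deriv (deriv z) p.1)) := funext hps'
    have hGs : HasFDerivAt (fun p : ℝ × ℝ => fderiv ℝ ψ (x p) (deriv z p.1) +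
        p.2 * fderiv ℝ ψ (x p) (lperp (deriv (deriv z) p.1))) _ (s, 0) := hT1.add hT2
    rw [ps, he, hGs.fderiv]
    simp [hDxs10, hxs]
    ring
  -- curve identities
  have hip : ∀ u : ℝ, (inner ℝ (deriv z u) (deriv z u) : ℝ) = 1 := by
    intro u
    rw [real_inner_self_eq_norm_sq, hunit]
    norm_num
  have horth : (inner ℝ (deriv (deriv z) s) (deriv z s) : ℝ) = 0 := by
    have hd : HasDerivAt (fun u : ℝ => (inner ℝ (deriv z u) (deriv z u) : ℝ))
        ((inner ℝ (deriv z s) (deriv (deriv z) s) : ℝ) +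
          (inner ℝ (deriv (deriv z) s) (deriv z s) : ℝ)) s :=
      HasDerivAt.inner ℝ (hz'd s).hasDerivAt (hz'd s).hasDerivAt
    have hconst : HasDerivAt (fun u : ℝ => (inner ℝ (deriv z u) (deriv z u) : ℝ)) 0 s := by
      have he : (fun u : ℝ => (inner ℝ (deriv z u) (deriv z u) : ℝ)) = fun _ => (1 : ℝ) :=
        funext hip
      rw [he]
      exact hasDerivAt_const s 1
    have h0 := hconst.unique hd
    have h1 : (inner ℝ (deriv (deriv z) s) (deriv z s) : ℝ)
        = inner ℝ (deriv z s) (deriv (deriv z) s) := real_inner_comm _ _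
    rw [h1]
    linarith
  -- coordinates
  set t0 := deriv z s 0 with ht0
  set t1 := deriv z s 1 with ht1
  set w0 := deriv (deriv z) s 0 with hw0
  set w1 := deriv (deriv z) s 1 with hw1
  have htt : t0 ^ 2 + t1 ^ 2 = 1 := by
    have := hip s
    rw [inner_coords] at this
    nlinarith [this]
  have horthc : w0 * t0 + w1 * t1 = 0 := by
    have := horth
    rw [inner_coords] at this
    linarith
  have hκc : κ s = w0 * (-t1) + w1 * t0 := by
    rw [hκ, perp_eq_lperp, inner_coords]
    simp [hw0, hw1, ht0, ht1]
  -- decomposition of z''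
  have hz''dec : deriv (deriv z) s = κ s • lperp (deriv z s) := by
    ext i
    fin_cases i
    · show w0 = (κ s • lperp (deriv z s)) 0
      have : (κ s • lperp (deriv z s)) 0 = κ s * (-(t1)) := by
        simp [PiLp.smul_apply, smul_eq_mul, ht1]
      rw [this, hκc]
      linear_combination t0 * horthc - w0 * htt
    · show w1 = (κ s • lperp (deriv z s)) 1
      have : (κ s • lperp (deriv z s)) 1 = κ s * t0 := by
        simp [PiLp.smul_apply, smul_eq_mul, ht0]
      rw [this, hκc]
      linear_combination t1 * horthc - w1 * htt
  -- second partials of ψ in coordinates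
  have hpd2 : ∀ i j : Fin 2, pdE (fun q => fderiv ℝ ψ q (EuclideanSpace.single j 1)) i (z s)
      = f2 (z s) (EuclideanSpace.single i 1) (EuclideanSpace.single j 1) := by
    intro i j
    have h := (hDψd (z s)).hasFDerivAt.clm_apply
      (hasFDerivAt_const (EuclideanSpace.single j (1 : ℝ)) (z s))
    simp only [pdE]
    rw [h.fderiv]
    simp [hf2def]
  have hv0e : ∀ j : Fin 2, (fun q => v q 0)
      = fun q => -(fderiv ℝ ψ q (EuclideanSpace.single (1 : Fin 2) 1)) := by
    intro _; funext q; rw [hv0 q]; rfl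
  have hv1e : (fun q => v q 1)
      = fun q => fderiv ℝ ψ q (EuclideanSpace.single (0 : Fin 2) 1) := by
    funext q; rw [hv1 q]; rfl
  have hpdv0 : ∀ i : Fin 2, pdE (fun q => v q 0) i (z s)
      = -(f2 (z s) (EuclideanSpace.single i 1) (EuclideanSpace.single 1 1)) := by
    intro i
    rw [hv0e i]
    simp only [pdE]
    rw [fderiv_fun_neg]
    simp only [ContinuousLinearMap.neg_apply, neg_inj]
    exact hpd2 i 1
  have hpdv1 : ∀ i : Fin 2, pdE (fun q => v q 1) i (z s)
      = f2 (z s) (EuclideanSpace.single i 1) (EuclideanSpace.single 0 1) := by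
    intro i
    rw [hv1e]
    exact hpd2 i 0
  -- bilinear expansion
  set B : Fin 2 → Fin 2 → ℝ := fun i j =>
    f2 (z s) (EuclideanSpace.single i 1) (EuclideanSpace.single j 1) with hBdef
  have hexp : ∀ a b : EuclideanSpace ℝ (Fin 2), f2 (z s) a b
      = a 0 * (b 0 * B 0 0 + b 1 * B 0 1) + a 1 * (b 0 * B 1 0 + b 1 * B 1 1) := by
    intro a b
    conv_lhs => rw [euclid_decomp a]
    conv_lhs => rw [euclid_decomp b]
    simp only [map_add, map_smul, ContinuousLinearMap.add_apply, ContinuousLinearMap.smul_apply,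
      smul_eq_mul, hBdef]
    ring
  set D : Fin 2 → ℝ := fun i => fderiv ℝ ψ (z s) (EuclideanSpace.single i 1) with hDdef
  have hDexp : ∀ a : EuclideanSpace ℝ (Fin 2),
      fderiv ℝ ψ (z s) a = a 0 * D 0 + a 1 * D 1 := by
    intro a
    conv_lhs => rw [euclid_decomp a]
    simp only [map_add, map_smul, smul_eq_mul, hDdef]
  -- assemble
  rw [Fin.sum_univ_two]
  rw [Fin.sum_univ_two, Fin.sum_univ_two]
  rw [hpdv0 0, hpdv0 1, hpdv1 0, hpdv1 1, hpss, hpll, hpl' (s, 0), hxs, hz''dec, map_smul]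
  rw [hT', hN']
  rw [hexp (deriv z s) (deriv z s), hexp (lperp (deriv z s)) (lperp (deriv z s))]
  simp only [lperp_apply_zero, lperp_apply_one, smul_eq_mul, ← ht0, ← ht1, ← hBdef]
  ring
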